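/- Let z, r : ℝ × ℝ → ℂ be smooth functions solving the Mikhailov–Lenells system. Define w = ((3 + √3 i)/4) r_x + ((3 − √3 i)/4) z_x − (3/2) z r and h = ((1 − √3 i)/4) r_{xx} + ((1 + √3 i)/4) z_{xx} + ((√3 i (z + r) − 3r)/2) r_x − ((√3 i (z + r) + 3z)/2) z_x + r³ + z³. Then (w, h) solves the (complex-valued) good Boussinesq system: w_t = h_x and h_t + (1/3) w_{xxx} + (4/3)(w²)_x = 0. -/

import Mathlib

open Complex

/-- Partial derivative in the first (space) variable, for complex-valued functions. -/
noncomputable def pdx (f : ℝ → ℝ → ℂ) : ℝ → ℝ → ℂ := fun x t => deriv (fun x' => f x' t) x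

/-- Partial derivative in the second (time) variable, for complex-valued functions. -/
noncomputable def pdt (f : ℝ → ℝ → ℂ) : ℝ → ℝ → ℂ := fun x t => deriv (fun t' => f x t') t

/-- The Mikhailov–Lenells system for complex-valued functions z, r. -/
def MikhailovLenells (z r : ℝ → ℝ → ℂ) : Prop :=
  ∀ x t : ℝ,
    I * pdt z x t + ((Real.sqrt 3 : ℂ)/3) * pdx (pdx z) x t
      + 2 * I * r x t * pdx r x t = 0 ∧
    I * pdt r x t - ((Real.sqrt 3 : ℂ)/3) * pdx (pdx r) x t
      + 2 * I * z x t * pdx z x t = 0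

/-- The (complex-valued) good Boussinesq system. -/
def GoodBoussinesqC (w h : ℝ → ℝ → ℂ) : Prop :=
  ∀ x t : ℝ,
    pdt w x t = pdx h x t ∧
    pdt h x t + (1/3) * pdx (pdx (pdx w)) x t
      + (4/3) * pdx (fun x t => (w x t)^2) x t = 0

section Helpers

variable {f : ℝ → ℝ → ℂ}

private lemma slice_x (hf : ContDiff ℝ (⊤ : ℕ∞) (fun s : ℝ × ℝ => f s.1 s.2)) (x t : ℝ) :
    HasDerivAt (fun x' => f x' t) (pdx f x t) x := by
  have h : DifferentiableAt ℝ (fun x' : ℝ => f x' t) x :=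
    ((hf.differentiable (by simp)).comp (differentiable_id.prodMk (differentiable_const t))) x
  exact h.hasDerivAt

private lemma slice_t (hf : ContDiff ℝ (⊤ : ℕ∞) (fun s : ℝ × ℝ => f s.1 s.2)) (x t : ℝ) :
    HasDerivAt (fun t' => f x t') (pdt f x t) t := by
  have h : DifferentiableAt ℝ (fun t' : ℝ => f x t') t :=
    ((hf.differentiable (by simp)).comp ((differentiable_const x).prodMk differentiable_id)) t
  exact h.hasDerivAt

private lemma pdx_fderiv (hf : ContDiff ℝ (⊤ : ℕ∞) (fun s : ℝ × ℝ => f s.1 s.2)) (x t : ℝ) :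
    pdx f x t = fderiv ℝ (fun s : ℝ × ℝ => f s.1 s.2) (x, t) (1, 0) := by
  have h := HasFDerivAt.comp_hasDerivAt (f := fun x' : ℝ => (x', t)) x (((hf.differentiable (by simp)) (x, t)).hasFDerivAt)
    ((hasDerivAt_id x).prodMk (hasDerivAt_const x t))
  exact h.deriv

private lemma pdt_fderiv (hf : ContDiff ℝ (⊤ : ℕ∞) (fun s : ℝ × ℝ => f s.1 s.2)) (x t : ℝ) :
    pdt f x t = fderiv ℝ (fun s : ℝ × ℝ => f s.1 s.2) (x, t) (0, 1) := by
  have h := HasFDerivAt.comp_hasDerivAt (f := fun t' : ℝ => (x, t')) t (((hf.differentiable (by simp)) (x, t)).hasFDerivAt)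
    ((hasDerivAt_const t x).prodMk (hasDerivAt_id t))
  exact h.deriv

private lemma contDiff_pdx (hf : ContDiff ℝ (⊤ : ℕ∞) (fun s : ℝ × ℝ => f s.1 s.2)) :
    ContDiff ℝ (⊤ : ℕ∞) (fun s : ℝ × ℝ => pdx f s.1 s.2) := by
  have he : (fun s : ℝ × ℝ => pdx f s.1 s.2)
      = fun s => fderiv ℝ (fun s : ℝ × ℝ => f s.1 s.2) s ((1 : ℝ), (0 : ℝ)) := by
    funext s; exact pdx_fderiv hf s.1 s.2
  rw [he]
  exact (hf.fderiv_right (by simp)).clm_apply contDiff_const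

private lemma contDiff_pdt (hf : ContDiff ℝ (⊤ : ℕ∞) (fun s : ℝ × ℝ => f s.1 s.2)) :
    ContDiff ℝ (⊤ : ℕ∞) (fun s : ℝ × ℝ => pdt f s.1 s.2) := by
  have he : (fun s : ℝ × ℝ => pdt f s.1 s.2)
      = fun s => fderiv ℝ (fun s : ℝ × ℝ => f s.1 s.2) s ((0 : ℝ), (1 : ℝ)) := by
    funext s; exact pdt_fderiv hf s.1 s.2
  rw [he]
  exact (hf.fderiv_right (by simp)).clm_apply contDiff_const

private lemma pdt_pdx_comm (hf : ContDiff ℝ (⊤ : ℕ∞) (fun s : ℝ × ℝ => f s.1 s.2)) (x t : ℝ) :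
    pdt (pdx f) x t = pdx (pdt f) x t := by
  set F : ℝ × ℝ → ℂ := fun s => f s.1 s.2 with hF
  have hd : Differentiable ℝ F := hf.differentiable (by simp)
  have hΦ : HasFDerivAt (fderiv ℝ F) (fderiv ℝ (fderiv ℝ F) (x, t)) (x, t) :=
    (((hf.fderiv_right (m := (⊤ : ℕ∞)) (by simp)).differentiable (by simp)) (x, t)).hasFDerivAt
  have hsym := second_derivative_symmetric (fun y => (hd y).hasFDerivAt) hΦ
    ((0 : ℝ), (1 : ℝ)) ((1 : ℝ), (0 : ℝ))
  have e1 : pdt (pdx f) x t = fderiv ℝ (fun s : ℝ × ℝ => pdx f s.1 s.2) (x, t) (0, 1) :=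
    pdt_fderiv (contDiff_pdx hf) x t
  have e2 : pdx (pdt f) x t = fderiv ℝ (fun s : ℝ × ℝ => pdt f s.1 s.2) (x, t) (1, 0) :=
    pdx_fderiv (contDiff_pdt hf) x t
  have g1 : (fun s : ℝ × ℝ => pdx f s.1 s.2) = fun s => fderiv ℝ F s ((1 : ℝ), (0 : ℝ)) :=
    funext fun s => pdx_fderiv hf s.1 s.2
  have g2 : (fun s : ℝ × ℝ => pdt f s.1 s.2) = fun s => fderiv ℝ F s ((0 : ℝ), (1 : ℝ)) :=
    funext fun s => pdt_fderiv hf s.1 s.2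
  have k1 : HasFDerivAt (fun s => fderiv ℝ F s ((1 : ℝ), (0 : ℝ)))
      ((ContinuousLinearMap.apply ℝ ℂ ((1 : ℝ), (0 : ℝ))).comp
        (fderiv ℝ (fderiv ℝ F) (x, t))) (x, t) :=
    (ContinuousLinearMap.apply ℝ ℂ ((1 : ℝ), (0 : ℝ))).hasFDerivAt.comp (x, t) hΦ
  have k2 : HasFDerivAt (fun s => fderiv ℝ F s ((0 : ℝ), (1 : ℝ)))
      ((ContinuousLinearMap.apply ℝ ℂ ((0 : ℝ), (1 : ℝ))).comp
        (fderiv ℝ (fderiv ℝ F) (x, t))) (x, t) :=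
    (ContinuousLinearMap.apply ℝ ℂ ((0 : ℝ), (1 : ℝ))).hasFDerivAt.comp (x, t) hΦ
  rw [e1, e2, g1, g2, k1.fderiv, k2.fderiv]
  simpa using hsym

end Helpers

/-- The Miura transformation from the Mikhailov–Lenells system to the good
Boussinesq system. -/
theorem miura_ML_to_GB (z r : ℝ → ℝ → ℂ)
    (hz : ContDiff ℝ (⊤ : ℕ∞) (fun s : ℝ × ℝ => z s.1 s.2))
    (hr : ContDiff ℝ (⊤ : ℕ∞) (fun s : ℝ × ℝ => r s.1 s.2))
    (hML : MikhailovLenells z r) :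
    GoodBoussinesqC
      (fun x t => ((3 + (Real.sqrt 3 : ℂ) * I)/4) * pdx r x t
        + ((3 - (Real.sqrt 3 : ℂ) * I)/4) * pdx z x t - (3/2) * z x t * r x t)
      (fun x t => ((1 - (Real.sqrt 3 : ℂ) * I)/4) * pdx (pdx r) x t
        + ((1 + (Real.sqrt 3 : ℂ) * I)/4) * pdx (pdx z) x t
        + (((Real.sqrt 3 : ℂ) * I * (z x t + r x t) - 3 * r x t)/2) * pdx r x t
        - (((Real.sqrt 3 : ℂ) * I * (z x t + r x t) + 3 * z x t)/2) * pdx z x t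
        + (r x t)^3 + (z x t)^3) := by
  have hu : ((Real.sqrt 3 : ℂ) * I) ^ 2 = -3 := by
    have h3 : ((Real.sqrt 3 : ℂ)) ^ 2 = 3 := by
      norm_cast
      rw [Real.sq_sqrt] ; norm_num
    rw [mul_pow, h3, I_sq]; ring
  have hzc1 := contDiff_pdx hz
  have hzc2 := contDiff_pdx hzc1
  have hzc3 := contDiff_pdx hzc2
  have hrc1 := contDiff_pdx hr
  have hrc2 := contDiff_pdx hrc1
  have hrc3 := contDiff_pdx hrc2
  have Xz := slice_x hz
  have Xz1 := slice_x hzc1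
  have Xz2 := slice_x hzc2
  have Xz3 := slice_x hzc3
  have Xr := slice_x hr
  have Xr1 := slice_x hrc1
  have Xr2 := slice_x hrc2
  have Xr3 := slice_x hrc3
  have Tz := slice_t hz
  have Tz1 := slice_t hzc1
  have Tz2 := slice_t hzc2
  have Tr := slice_t hr
  have Tr1 := slice_t hrc1
  have Tr2 := slice_t hrc2
  -- cubes
  have Xcr : ∀ x t : ℝ, HasDerivAt (fun x' => r x' t ^ 3)
      ((pdx r x t * r x t + r x t * pdx r x t) * r x t + r x t * r x t * pdx r x t) x := by
    intro x t
    have e : (fun x' : ℝ => r x' t ^ 3) = fun x' => r x' t * r x' t * r x' t := by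
      funext x'; ring
    rw [e]; exact ((Xr x t).mul (Xr x t)).mul (Xr x t)
  have Xcz : ∀ x t : ℝ, HasDerivAt (fun x' => z x' t ^ 3)
      ((pdx z x t * z x t + z x t * pdx z x t) * z x t + z x t * z x t * pdx z x t) x := by
    intro x t
    have e : (fun x' : ℝ => z x' t ^ 3) = fun x' => z x' t * z x' t * z x' t := by
      funext x'; ring
    rw [e]; exact ((Xz x t).mul (Xz x t)).mul (Xz x t)
  have Tcr : ∀ x t : ℝ, HasDerivAt (fun t' => r x t' ^ 3)
      ((pdt r x t * r x t + r x t * pdt r x t) * r x t + r x t * r x t * pdt r x t) t := by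
    intro x t
    have e : (fun t' : ℝ => r x t' ^ 3) = fun t' => r x t' * r x t' * r x t' := by
      funext t'; ring
    rw [e]; exact ((Tr x t).mul (Tr x t)).mul (Tr x t)
  have Tcz : ∀ x t : ℝ, HasDerivAt (fun t' => z x t' ^ 3)
      ((pdt z x t * z x t + z x t * pdt z x t) * z x t + z x t * z x t * pdt z x t) t := by
    intro x t
    have e : (fun t' : ℝ => z x t' ^ 3) = fun t' => z x t' * z x t' * z x t' := by
      funext t'; ring
    rw [e]; exact ((Tz x t).mul (Tz x t)).mul (Tz x t)
  -- time derivatives from the ML system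
  have Ez : ∀ x t : ℝ, pdt z x t
      = (Real.sqrt 3 : ℂ) * I / 3 * pdx (pdx z) x t - 2 * (r x t * pdx r x t) := by
    intro x t
    have hml := (hML x t).1
    linear_combination (-I) * hml + (pdt z x t + 2 * (r x t * pdx r x t)) * Complex.I_sq
  have Er : ∀ x t : ℝ, pdt r x t
      = -((Real.sqrt 3 : ℂ) * I / 3) * pdx (pdx r) x t - 2 * (z x t * pdx z x t) := by
    intro x t
    have hml := (hML x t).2
    linear_combination (-I) * hml + (pdt r x t + 2 * (z x t * pdx z x t)) * Complex.I_sq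
  have Ez1 : ∀ x t : ℝ, pdt (pdx z) x t
      = (Real.sqrt 3 : ℂ) * I / 3 * pdx (pdx (pdx z)) x t
        - 2 * (pdx r x t * pdx r x t + r x t * pdx (pdx r) x t) := by
    intro x t
    rw [pdt_pdx_comm hz x t]
    show deriv (fun x' => pdt z x' t) x = _
    have e : (fun x' => pdt z x' t) = fun x' =>
        (Real.sqrt 3 : ℂ) * I / 3 * pdx (pdx z) x' t - 2 * (r x' t * pdx r x' t) :=
      funext fun x' => Ez x' t
    rw [e]
    exact (((Xz2 x t).const_mul _).sub (((Xr x t).mul (Xr1 x t)).const_mul 2)).deriv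
  have Er1 : ∀ x t : ℝ, pdt (pdx r) x t
      = -((Real.sqrt 3 : ℂ) * I / 3) * pdx (pdx (pdx r)) x t
        - 2 * (pdx z x t * pdx z x t + z x t * pdx (pdx z) x t) := by
    intro x t
    rw [pdt_pdx_comm hr x t]
    show deriv (fun x' => pdt r x' t) x = _
    have e : (fun x' => pdt r x' t) = fun x' =>
        -((Real.sqrt 3 : ℂ) * I / 3) * pdx (pdx r) x' t - 2 * (z x' t * pdx z x' t) :=
      funext fun x' => Er x' t
    rw [e]
    exact (((Xr2 x t).const_mul _).sub (((Xz x t).mul (Xz1 x t)).const_mul 2)).deriv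
  have Ez2 : ∀ x t : ℝ, pdt (pdx (pdx z)) x t
      = (Real.sqrt 3 : ℂ) * I / 3 * pdx (pdx (pdx (pdx z))) x t
        - 2 * ((pdx (pdx r) x t * pdx r x t + pdx r x t * pdx (pdx r) x t)
          + (pdx r x t * pdx (pdx r) x t + r x t * pdx (pdx (pdx r)) x t)) := by
    intro x t
    rw [pdt_pdx_comm hzc1 x t]
    show deriv (fun x' => pdt (pdx z) x' t) x = _
    have e : (fun x' => pdt (pdx z) x' t) = fun x' =>
        (Real.sqrt 3 : ℂ) * I / 3 * pdx (pdx (pdx z)) x' t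
          - 2 * (pdx r x' t * pdx r x' t + r x' t * pdx (pdx r) x' t) :=
      funext fun x' => Ez1 x' t
    rw [e]
    exact (((Xz3 x t).const_mul _).sub
      ((((Xr1 x t).mul (Xr1 x t)).add ((Xr x t).mul (Xr2 x t))).const_mul 2)).deriv
  have Er2 : ∀ x t : ℝ, pdt (pdx (pdx r)) x t
      = -((Real.sqrt 3 : ℂ) * I / 3) * pdx (pdx (pdx (pdx r))) x t
        - 2 * ((pdx (pdx z) x t * pdx z x t + pdx z x t * pdx (pdx z) x t)
          + (pdx z x t * pdx (pdx z) x t + z x t * pdx (pdx (pdx z)) x t)) := by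
    intro x t
    rw [pdt_pdx_comm hrc1 x t]
    show deriv (fun x' => pdt (pdx r) x' t) x = _
    have e : (fun x' => pdt (pdx r) x' t) = fun x' =>
        -((Real.sqrt 3 : ℂ) * I / 3) * pdx (pdx (pdx r)) x' t
          - 2 * (pdx z x' t * pdx z x' t + z x' t * pdx (pdx z) x' t) :=
      funext fun x' => Er1 x' t
    rw [e]
    exact (((Xr3 x t).const_mul _).sub
      ((((Xz1 x t).mul (Xz1 x t)).add ((Xz x t).mul (Xz2 x t))).const_mul 2)).deriv
  set W : ℝ → ℝ → ℂ := (fun x t => ((3 + (Real.sqrt 3 : ℂ) * I)/4) * pdx r x t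
        + ((3 - (Real.sqrt 3 : ℂ) * I)/4) * pdx z x t - (3/2) * z x t * r x t) with hW
  set H : ℝ → ℝ → ℂ := (fun x t => ((1 - (Real.sqrt 3 : ℂ) * I)/4) * pdx (pdx r) x t
        + ((1 + (Real.sqrt 3 : ℂ) * I)/4) * pdx (pdx z) x t
        + (((Real.sqrt 3 : ℂ) * I * (z x t + r x t) - 3 * r x t)/2) * pdx r x t
        - (((Real.sqrt 3 : ℂ) * I * (z x t + r x t) + 3 * z x t)/2) * pdx z x t
        + (r x t)^3 + (z x t)^3) with hH
  have Wval : ∀ x t : ℝ, W x t = ((3 + (Real.sqrt 3 : ℂ) * I)/4) * pdx r x t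
      + ((3 - (Real.sqrt 3 : ℂ) * I)/4) * pdx z x t - (3/2) * z x t * r x t := by
    intro x t; rw [hW]
  have W1 : ∀ x t : ℝ, pdx W x t = ((3 + (Real.sqrt 3 : ℂ) * I)/4) * pdx (pdx r) x t
      + ((3 - (Real.sqrt 3 : ℂ) * I)/4) * pdx (pdx z) x t
      - ((3/2) * pdx z x t * r x t + (3/2) * z x t * pdx r x t) := by
    intro x t; rw [hW]
    exact ((((Xr1 x t).const_mul _).add ((Xz1 x t).const_mul _)).sub
      (((Xz x t).const_mul (3/2)).mul (Xr x t))).deriv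
  have W2 : ∀ x t : ℝ, pdx (pdx W) x t = ((3 + (Real.sqrt 3 : ℂ) * I)/4) * pdx (pdx (pdx r)) x t
      + ((3 - (Real.sqrt 3 : ℂ) * I)/4) * pdx (pdx (pdx z)) x t
      - (((3/2) * pdx (pdx z) x t * r x t + (3/2) * pdx z x t * pdx r x t)
        + ((3/2) * pdx z x t * pdx r x t + (3/2) * z x t * pdx (pdx r) x t)) := by
    intro x t
    show deriv (fun x' => pdx W x' t) x = _
    have e : (fun x' => pdx W x' t) = fun x' =>
        ((3 + (Real.sqrt 3 : ℂ) * I)/4) * pdx (pdx r) x' t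
        + ((3 - (Real.sqrt 3 : ℂ) * I)/4) * pdx (pdx z) x' t
        - ((3/2) * pdx z x' t * r x' t + (3/2) * z x' t * pdx r x' t) :=
      funext fun x' => W1 x' t
    rw [e]
    exact ((((Xr2 x t).const_mul _).add ((Xz2 x t).const_mul _)).sub
      (((((Xz1 x t).const_mul (3/2)).mul (Xr x t))).add
        (((Xz x t).const_mul (3/2)).mul (Xr1 x t)))).deriv
  have W3 : ∀ x t : ℝ, pdx (pdx (pdx W)) x t
      = ((3 + (Real.sqrt 3 : ℂ) * I)/4) * pdx (pdx (pdx (pdx r))) x t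
      + ((3 - (Real.sqrt 3 : ℂ) * I)/4) * pdx (pdx (pdx (pdx z))) x t
      - ((((3/2) * pdx (pdx (pdx z)) x t * r x t + (3/2) * pdx (pdx z) x t * pdx r x t)
          + ((3/2) * pdx (pdx z) x t * pdx r x t + (3/2) * pdx z x t * pdx (pdx r) x t))
        + (((3/2) * pdx (pdx z) x t * pdx r x t + (3/2) * pdx z x t * pdx (pdx r) x t)
          + ((3/2) * pdx z x t * pdx (pdx r) x t + (3/2) * z x t * pdx (pdx (pdx r)) x t))) := by
    intro x t
    show deriv (fun x' => pdx (pdx W) x' t) x = _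
    have e : (fun x' => pdx (pdx W) x' t) = fun x' =>
        ((3 + (Real.sqrt 3 : ℂ) * I)/4) * pdx (pdx (pdx r)) x' t
        + ((3 - (Real.sqrt 3 : ℂ) * I)/4) * pdx (pdx (pdx z)) x' t
        - (((3/2) * pdx (pdx z) x' t * r x' t + (3/2) * pdx z x' t * pdx r x' t)
          + ((3/2) * pdx z x' t * pdx r x' t + (3/2) * z x' t * pdx (pdx r) x' t)) :=
      funext fun x' => W2 x' t
    rw [e]
    exact ((((Xr3 x t).const_mul _).add ((Xz3 x t).const_mul _)).sub
      (((((Xz2 x t).const_mul (3/2)).mul (Xr x t)).add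
          (((Xz1 x t).const_mul (3/2)).mul (Xr1 x t))).add
        ((((Xz1 x t).const_mul (3/2)).mul (Xr1 x t)).add
          (((Xz x t).const_mul (3/2)).mul (Xr2 x t))))).deriv
  have hWc : ContDiff ℝ (⊤ : ℕ∞) (fun s : ℝ × ℝ => W s.1 s.2) := by
    rw [hW]
    exact ((contDiff_const.mul hrc1).add (contDiff_const.mul hzc1)).sub
      ((contDiff_const.mul hz).mul hr)
  intro x t
  refine ⟨?_, ?_⟩
  · -- first Boussinesq equation
    have hL : pdt W x t = ((3 + (Real.sqrt 3 : ℂ) * I)/4) * pdt (pdx r) x t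
        + ((3 - (Real.sqrt 3 : ℂ) * I)/4) * pdt (pdx z) x t
        - ((3/2) * pdt z x t * r x t + (3/2) * z x t * pdt r x t) := by
      rw [hW]
      exact ((((Tr1 x t).const_mul _).add ((Tz1 x t).const_mul _)).sub
        (((Tz x t).const_mul (3/2)).mul (Tr x t))).deriv
    have hR : pdx H x t = ((1 - (Real.sqrt 3 : ℂ) * I)/4) * pdx (pdx (pdx r)) x t
        + ((1 + (Real.sqrt 3 : ℂ) * I)/4) * pdx (pdx (pdx z)) x t
        + ((((Real.sqrt 3 : ℂ) * I * (pdx z x t + pdx r x t) - 3 * pdx r x t)/2) * pdx r x t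
          + (((Real.sqrt 3 : ℂ) * I * (z x t + r x t) - 3 * r x t)/2) * pdx (pdx r) x t)
        - ((((Real.sqrt 3 : ℂ) * I * (pdx z x t + pdx r x t) + 3 * pdx z x t)/2) * pdx z x t
          + (((Real.sqrt 3 : ℂ) * I * (z x t + r x t) + 3 * z x t)/2) * pdx (pdx z) x t)
        + ((pdx r x t * r x t + r x t * pdx r x t) * r x t + r x t * r x t * pdx r x t)
        + ((pdx z x t * z x t + z x t * pdx z x t) * z x t + z x t * z x t * pdx z x t) := by
      rw [hH]
      have HE := ((((Xz x t).add (Xr x t)).const_mul ((Real.sqrt 3 : ℂ) * I)).sub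
        ((Xr x t).const_mul 3)).div_const 2
      have HF := ((((Xz x t).add (Xr x t)).const_mul ((Real.sqrt 3 : ℂ) * I)).add
        ((Xz x t).const_mul 3)).div_const 2
      exact ((((((Xr2 x t).const_mul _).add ((Xz2 x t).const_mul _)).add
        (HE.mul (Xr1 x t))).sub (HF.mul (Xz1 x t))).add (Xcr x t)).add (Xcz x t) |>.deriv
    rw [hL, hR, Ez1, Er1, Ez, Er]
    linear_combination (-(1/12) * (pdx (pdx (pdx r)) x t + pdx (pdx (pdx z)) x t)) * hu
  · -- second Boussinesq equation
    have hT : pdt H x t = ((1 - (Real.sqrt 3 : ℂ) * I)/4) * pdt (pdx (pdx r)) x t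
        + ((1 + (Real.sqrt 3 : ℂ) * I)/4) * pdt (pdx (pdx z)) x t
        + ((((Real.sqrt 3 : ℂ) * I * (pdt z x t + pdt r x t) - 3 * pdt r x t)/2) * pdx r x t
          + (((Real.sqrt 3 : ℂ) * I * (z x t + r x t) - 3 * r x t)/2) * pdt (pdx r) x t)
        - ((((Real.sqrt 3 : ℂ) * I * (pdt z x t + pdt r x t) + 3 * pdt z x t)/2) * pdx z x t
          + (((Real.sqrt 3 : ℂ) * I * (z x t + r x t) + 3 * z x t)/2) * pdt (pdx z) x t)
        + ((pdt r x t * r x t + r x t * pdt r x t) * r x t + r x t * r x t * pdt r x t)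
        + ((pdt z x t * z x t + z x t * pdt z x t) * z x t + z x t * z x t * pdt z x t) := by
      rw [hH]
      have HE := ((((Tz x t).add (Tr x t)).const_mul ((Real.sqrt 3 : ℂ) * I)).sub
        ((Tr x t).const_mul 3)).div_const 2
      have HF := ((((Tz x t).add (Tr x t)).const_mul ((Real.sqrt 3 : ℂ) * I)).add
        ((Tz x t).const_mul 3)).div_const 2
      exact ((((((Tr2 x t).const_mul _).add ((Tz2 x t).const_mul _)).add
        (HE.mul (Tr1 x t))).sub (HF.mul (Tz1 x t))).add (Tcr x t)).add (Tcz x t) |>.deriv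
    have hsq : pdx (fun x t => W x t ^ 2) x t
        = pdx W x t * W x t + W x t * pdx W x t := by
      have e : (fun x' : ℝ => W x' t ^ 2) = fun x' => W x' t * W x' t := by
        funext x'; ring
      show deriv (fun x' => W x' t ^ 2) x = _
      rw [e]
      exact ((slice_x hWc x t).mul (slice_x hWc x t)).deriv
    rw [hT, W3, hsq, W1, Wval, Ez2, Er2, Ez1, Er1, Ez, Er]
    linear_combination ((1/12) * pdx (pdx (pdx (pdx r))) x t
      - (1/6) * (r x t * pdx (pdx (pdx r)) x t)
      + (1/12) * pdx (pdx (pdx (pdx z))) x t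
      - (1/6) * (pdx (pdx (pdx z)) x t * r x t)
      - (1/6) * (z x t * pdx (pdx (pdx r)) x t)
      - (1/6) * (z x t * pdx (pdx (pdx z)) x t)) * hu
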